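/- Let R(x) = 1 - G(x) where G is the Gauss map, and let x ∈ (0,1) be irrational with regular continued fraction expansion [0; x₁, x₂, x₃, …]. Then for each j ≥ 1, R^{x₂+x₄+⋯+x_{2j}}(x) = [0; x_{2j+1}+1, x_{2j+2}, x_{2j+3}, …], and if 0 < ℓ < x_{2j}, then R^{x₂+x₄+⋯+x_{2j-2}+ℓ}(x) = [0; 1, x_{2j}-ℓ, x_{2j+1}, x_{2j+2}, …]. -/

import Mathlib

open Set MeasureTheory Filter Topology
open scoped Classical

/-- The Gauss map `G(x) = 1/x - ⌊1/x⌋`. -/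
noncomputable def gauss (x : ℝ) : ℝ := Int.fract (1 / x)

/-- The flipped region `D_α = ⋃_{n ≥ 1} [1/(n+α), 1/n]`. -/
def Dset (α : ℝ) : Set ℝ := ⋃ n : ℕ, Set.Icc (1 / ((n : ℝ) + 1 + α)) (1 / ((n : ℝ) + 1))

/-- The flipped α-continued fraction map `T_α`. -/
noncomputable def T (α x : ℝ) : ℝ := if x ∈ Dset α then 1 - gauss x else gauss x

/-- The map `R = 1 - G`. -/
noncomputable def Rmap (x : ℝ) : ℝ := 1 - gauss x

/-!
If `z = [0; a₁, a₂, …]` then `1 - z = [0; 1, a₁ - 1, a₂, …]` when `a₁ ≥ 2`, and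
`1 - z = [0; a₂ + 1, a₃, …]` when `a₁ = 1`. Applied to `z = G(y)`, this shows that while the
second digit `m` of `y` is not yet exhausted, each application of `R = 1 - G` lowers it by one and
keeps all later digits (in reals: `1 / G(Rˡ y) = 1 / G(y) - ℓ`), and the `m`-th application
merges what is left into the third digit: `1 / Rᵐ y = 1 / G²(y) + 1`. Running through the
blocks of lengths `x₂, x₄, …` one after another gives the iterates of `R` along the whole expansion.
-/

lemma Irrational.gauss {z : ℝ} (h : Irrational z) : Irrational (gauss z) := by
  rw [_root_.gauss, Int.fract, one_div]
  exact h.inv.sub_intCast _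

lemma Irrational.iterate_gauss {z : ℝ} (h : Irrational z) (n : ℕ) :
    Irrational (_root_.gauss^[n] z) :=
  Function.Iterate.rec Irrational h (fun _ => Irrational.gauss) n

lemma Irrational.cast_lt_one_div_of_le_floor {z : ℝ} (h : Irrational z) {n : ℕ}
    (hn : (n : ℤ) ≤ ⌊1 / z⌋) : (n : ℝ) < 1 / z := by
  refine lt_of_le_of_ne (Int.le_floor.1 hn) fun heq => ?_
  exact (one_div z ▸ h.inv).ne_nat n heq.symm

lemma mem_Ioo_of_two_lt_one_div {z : ℝ} (h : 2 < 1 / z) : z ∈ Ioo 0 (1 / 2) := by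
  have hz0 : 0 < z := one_div_pos.1 (by linarith)
  refine ⟨hz0, ?_⟩
  rw [lt_div_iff₀ hz0] at h
  linarith

lemma floor_one_div_one_sub_eq_one {z : ℝ} (hz0 : 0 < z) (hz : z < 1 / 2) :
    ⌊1 / (1 - z)⌋ = 1 := by
  have h1z : 0 < 1 - z := by linarith
  rw [Int.floor_eq_iff, le_div_iff₀ h1z, div_lt_iff₀ h1z]
  push_cast
  constructor <;> linarith

lemma one_div_gauss_one_sub {z : ℝ} (hz0 : 0 < z) (hz : z < 1 / 2) :
    1 / gauss (1 - z) = 1 / z - 1 := by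
  have h1z : 1 - z ≠ 0 := by linarith
  rw [gauss, Int.fract, floor_one_div_one_sub_eq_one hz0 hz, Int.cast_one,
    show 1 / (1 - z) - 1 = z / (1 - z) by field_simp; ring, one_div_div, sub_div,
    div_self hz0.ne', one_div]

lemma one_div_one_sub_eq_one_div_gauss_add_one {z : ℝ} (h : ⌊1 / z⌋ = 1) (hz : z ≠ 1) :
    1 / (1 - z) = 1 / gauss z + 1 := by
  have hz0 : z ≠ 0 := by rintro rfl; simp at h
  have h1z : 1 - z ≠ 0 := sub_ne_zero.2 hz.symm
  have h1z' : 1 / z - 1 ≠ 0 := by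
    rw [sub_ne_zero, ne_eq, div_eq_one_iff_eq hz0]; exact hz.symm
  rw [gauss, Int.fract, h, Int.cast_one]
  field_simp
  ring

lemma one_div_gauss_iterate_rmap {y : ℝ} {ℓ : ℕ} (hℓ : (ℓ : ℝ) + 1 < 1 / gauss y) :
    1 / gauss (Rmap^[ℓ] y) = 1 / gauss y - ℓ := by
  induction ℓ with
  | zero => simp
  | succ ℓ ih =>
    push_cast at hℓ
    have hprev := ih (by linarith)
    obtain ⟨hz0, hz⟩ :=
      mem_Ioo_of_two_lt_one_div (z := gauss (Rmap^[ℓ] y)) (by rw [hprev]; linarith)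
    rw [Function.iterate_succ_apply', Rmap, one_div_gauss_one_sub hz0 hz, hprev]
    push_cast
    ring

section Block

variable {y : ℝ} {m : ℕ} (hy : Irrational (gauss y)) (hm : (m : ℤ) = ⌊1 / gauss y⌋)
include hy hm

lemma one_div_gauss_iterate_rmap_of_lt {ℓ : ℕ} (hℓ : ℓ < m) :
    1 / gauss (Rmap^[ℓ] y) = 1 / gauss y - ℓ := by
  refine one_div_gauss_iterate_rmap ?_
  exact_mod_cast hy.cast_lt_one_div_of_le_floor (n := ℓ + 1) (by omega)

lemma floor_one_div_gauss_iterate_rmap {ℓ : ℕ} (hℓ : ℓ < m) :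
    ⌊1 / gauss (Rmap^[ℓ] y)⌋ = (m : ℤ) - ℓ := by
  rw [one_div_gauss_iterate_rmap_of_lt hy hm hℓ, hm, Int.floor_sub_natCast]

lemma gauss_gauss_iterate_rmap {ℓ : ℕ} (hℓ : ℓ < m) :
    gauss (gauss (Rmap^[ℓ] y)) = gauss (gauss y) := by
  rw [gauss, one_div_gauss_iterate_rmap_of_lt hy hm hℓ, Int.fract_sub_natCast]
  rfl

lemma floor_one_div_iterate_rmap {ℓ : ℕ} (hℓ0 : 0 < ℓ) (hℓ : ℓ < m) :
    ⌊1 / Rmap^[ℓ] y⌋ = 1 := by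
  obtain ⟨k, rfl⟩ : ∃ k, ℓ = k + 1 := ⟨ℓ - 1, by omega⟩
  have hk := one_div_gauss_iterate_rmap_of_lt hy hm (ℓ := k) (by omega)
  have hkm : (k : ℝ) + 2 ≤ m := by exact_mod_cast (show k + 2 ≤ m by omega)
  have hmy := hy.cast_lt_one_div_of_le_floor hm.le
  obtain ⟨hz0, hz⟩ :=
    mem_Ioo_of_two_lt_one_div (z := gauss (Rmap^[k] y)) (by rw [hk]; linarith)
  rw [Function.iterate_succ_apply', Rmap]
  exact floor_one_div_one_sub_eq_one hz0 hz

lemma one_div_iterate_rmap_eq_one_div_gauss_gauss_add_one :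
    1 / Rmap^[m] y = 1 / gauss (gauss y) + 1 := by
  have hpos : 0 < gauss y := lt_of_le_of_ne (Int.fract_nonneg _) hy.ne_zero.symm
  have hm0 : 0 < m := by
    have := Int.floor_pos.2 (one_le_one_div hpos (Int.fract_lt_one _).le)
    omega
  obtain ⟨k, rfl⟩ : ∃ k, m = k + 1 := ⟨m - 1, by omega⟩
  have hfloor : ⌊1 / gauss (Rmap^[k] y)⌋ = 1 := by
    rw [floor_one_div_gauss_iterate_rmap hy hm (by omega)]
    push_cast
    ring
  rw [Function.iterate_succ_apply', Rmap,
    one_div_one_sub_eq_one_div_gauss_add_one hfloor (Int.fract_lt_one _).ne,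
    gauss_gauss_iterate_rmap hy hm (by omega)]

lemma floor_one_div_iterate_rmap_eq_floor_add_one :
    ⌊1 / Rmap^[m] y⌋ = ⌊1 / gauss (gauss y)⌋ + 1 := by
  rw [one_div_iterate_rmap_eq_one_div_gauss_gauss_add_one hy hm, Int.floor_add_one]

lemma gauss_iterate_rmap_eq_gauss_gauss_gauss :
    gauss (Rmap^[m] y) = gauss (gauss (gauss y)) := by
  rw [gauss, one_div_iterate_rmap_eq_one_div_gauss_gauss_add_one hy hm, Int.fract_add_one]
  rfl

end Block

lemma gauss_iterate_rmap_sum_odd_digits {x : ℝ} (hirr : Irrational x) {a : ℕ → ℕ}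
    (ha : ∀ n, (a n : ℤ) = ⌊1 / (gauss^[n] x)⌋) (k : ℕ) :
    gauss (Rmap^[∑ i ∈ Finset.range k, a (2 * i + 1)] x) = gauss^[2 * k + 1] x := by
  induction k with
  | zero => simp
  | succ k ih =>
    have hy : Irrational (gauss (Rmap^[∑ i ∈ Finset.range k, a (2 * i + 1)] x)) :=
      ih ▸ hirr.iterate_gauss _
    rw [Finset.sum_range_succ, add_comm, Function.iterate_add_apply,
      gauss_iterate_rmap_eq_gauss_gauss_gauss hy (ih ▸ ha _), ih,
      show 2 * (k + 1) + 1 = 2 * k + 1 + 1 + 1 by ring]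
    simp only [Function.iterate_succ_apply']

/-- Here `a n` is the `(n+1)`-st digit of `x`, i.e. the paper's `xₙ` is `a (n-1)`. -/
theorem stmt_6_general (x : ℝ) (hirr : Irrational x)
    (a : ℕ → ℕ) (ha : ∀ n, (a n : ℤ) = ⌊1 / (gauss^[n] x)⌋) (j : ℕ) (hj : 1 ≤ j) :
    (⌊1 / (Rmap^[∑ i ∈ Finset.range j, a (2*i+1)] x)⌋ = (a (2*j) : ℤ) + 1 ∧
      gauss (Rmap^[∑ i ∈ Finset.range j, a (2*i+1)] x) = gauss^[2*j+1] x) ∧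
    (∀ ℓ : ℕ, 0 < ℓ → ℓ < a (2*j-1) →
      ⌊1 / (Rmap^[(∑ i ∈ Finset.range (j-1), a (2*i+1)) + ℓ] x)⌋ = 1 ∧
      ⌊1 / gauss (Rmap^[(∑ i ∈ Finset.range (j-1), a (2*i+1)) + ℓ] x)⌋
        = (a (2*j-1) : ℤ) - (ℓ : ℤ) ∧
      gauss^[2] (Rmap^[(∑ i ∈ Finset.range (j-1), a (2*i+1)) + ℓ] x)
        = gauss^[2*j] x) := by
  obtain ⟨j, rfl⟩ : ∃ j', j = j' + 1 := ⟨j - 1, by omega⟩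
  have hgy := gauss_iterate_rmap_sum_odd_digits hirr ha j
  set y := Rmap^[∑ i ∈ Finset.range j, a (2 * i + 1)] x
  have hy : Irrational (gauss y) := hgy ▸ hirr.iterate_gauss _
  have hm : (a (2 * j + 1) : ℤ) = ⌊1 / gauss y⌋ := hgy ▸ ha _
  have hggy : gauss (gauss y) = gauss^[2 * j + 2] x := by
    rw [hgy, Function.iterate_succ_apply' gauss (2 * j + 1)]
  rw [show 2 * (j + 1) - 1 = 2 * j + 1 by omega, show 2 * (j + 1) = 2 * j + 2 by ring,
    Nat.add_sub_cancel, Finset.sum_range_succ,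
    add_comm _ (a _), Function.iterate_add_apply]
  refine ⟨⟨?_, ?_⟩, fun ℓ hℓ0 hℓ => ?_⟩
  · rw [floor_one_div_iterate_rmap_eq_floor_add_one hy hm, hggy, ha]
  · rw [gauss_iterate_rmap_eq_gauss_gauss_gauss hy hm, hggy,
      ← Function.iterate_succ_apply' gauss]
  · rw [add_comm _ ℓ, Function.iterate_add_apply]
    exact ⟨floor_one_div_iterate_rmap hy hm hℓ0 hℓ,
      floor_one_div_gauss_iterate_rmap hy hm hℓ, (gauss_gauss_iterate_rmap hy hm hℓ).trans hggy⟩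

/-- iterates of `R = 1 - G` in terms of the regular continued
fraction digits of an irrational `x`.  Here `a n` is the `(n+1)`-st digit of
`x`, i.e. the paper's `xₙ` is `a (n-1)`. -/
theorem stmt_6 (x : ℝ) (hx : x ∈ Set.Ioo (0:ℝ) 1) (hirr : Irrational x)
    (a : ℕ → ℕ) (ha : ∀ n, (a n : ℤ) = ⌊1 / (gauss^[n] x)⌋) (j : ℕ) (hj : 1 ≤ j) :
    (⌊1 / (Rmap^[∑ i ∈ Finset.range j, a (2*i+1)] x)⌋ = (a (2*j) : ℤ) + 1 ∧
      gauss (Rmap^[∑ i ∈ Finset.range j, a (2*i+1)] x) = gauss^[2*j+1] x) ∧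
    (∀ ℓ : ℕ, 0 < ℓ → ℓ < a (2*j-1) →
      ⌊1 / (Rmap^[(∑ i ∈ Finset.range (j-1), a (2*i+1)) + ℓ] x)⌋ = 1 ∧
      ⌊1 / gauss (Rmap^[(∑ i ∈ Finset.range (j-1), a (2*i+1)) + ℓ] x)⌋
        = (a (2*j-1) : ℤ) - (ℓ : ℤ) ∧
      gauss^[2] (Rmap^[(∑ i ∈ Finset.range (j-1), a (2*i+1)) + ℓ] x)
        = gauss^[2*j] x) :=
  stmt_6_general x hirr a ha j hj
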